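/- arXiv:2303.08334 — 5 statements merged into one kernel-verified Lean document; each statement's English description precedes it below -/
import Mathlib

section
/- Let L, R, α, β be positive constants, let 0 < d < π/2, and assume F ∈ L^DE_{L,R,α,β}(D_d). Let μ = min{α,β}, let n be a positive integer, let h > 0, and set M = ⌈(1/h)·arsinh((μ/α)·q(dn/μ))⌉ and N = ⌈(1/h)·arsinh((μ/β)·q(dn/μ))⌉. Then sup_{x∈ℝ} | ∑_{k=−∞}^{−M−1} F(kh)·sinc((x−kh)/h) + ∑_{k=N+1}^{∞} F(kh)·sinc((x−kh)/h) | ≤ [ 2R/( πμh·√(1 + q(dn/μ)²) ) ]·e^{−πμ·q(dn/μ)}. -/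
/-!
On the real line the bound defining `MemLDE` gives `‖F t‖ ≤ R e^{-πβ sinh t}` and
`‖F t‖ ≤ R e^{πα sinh t}`, and `|sinc| ≤ 1`. Since `sinh (T + t) ≥ sinh T + t cosh T` for
`T, t ≥ 0`, the tail beyond `T = N h` is dominated by a geometric series with sum at most
`R e^{-πγ sinh T} / (πγ h cosh T)`, with `γ = β` (and, after `k ↦ -k`, `γ = α`, `T = M h` on the
left). The choice of `M` and `N` gives `γ sinh T ≥ μ q` and hence `γ cosh T ≥ μ √(1 + q²)`, so
each tail is at most half of the claimed bound.
-/

open Real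

/-- `sinc x = sin(πx)/(πx)` for `x ≠ 0`, and `sinc 0 = 1`. -/
noncomputable def sinc (x : ℝ) : ℝ := if x = 0 then 1 else Real.sin (π * x) / (π * x)

/-- The strip domain `D_d = {ζ ∈ ℂ : |Im ζ| < d}`. -/
def strip (d : ℝ) : Set ℂ := {ζ : ℂ | |ζ.im| < d}

/-- `F ∈ L^DE_{L,R,α,β}(D_d)`. -/
structure MemLDE (L R α β d : ℝ) (F : ℂ → ℂ) : Prop where
  differentiable : DifferentiableOn ℂ F (strip d)
  bound_strip : ∀ ζ ∈ strip d, ‖F ζ‖ ≤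
      L / (‖1 + Complex.exp (-(π : ℂ) * Complex.sinh ζ)‖ ^ α *
           ‖1 + Complex.exp ((π : ℂ) * Complex.sinh ζ)‖ ^ β)
  bound_real : ∀ x : ℝ, ‖F (x : ℂ)‖ ≤
      R / ((1 + Real.exp (-(π * Real.sinh x))) ^ α *
           (1 + Real.exp (π * Real.sinh x)) ^ β)

/-- `q(x) = x / arsinh x`. -/
noncomputable def qf (x : ℝ) : ℝ := x / Real.arsinh x

/-- `p(x) = x / arsinh (x / arsinh x)`. -/
noncomputable def pf (x : ℝ) : ℝ := x / Real.arsinh (x / Real.arsinh x)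

lemma abs_sinc_le_one (y : ℝ) : |_root_.sinc y| ≤ 1 := by
  unfold _root_.sinc
  split_ifs
  · simp
  · rw [abs_div]
    exact div_le_one_of_le₀ abs_sin_le_abs (abs_nonneg _)

lemma norm_mul_sinc_le (z : ℂ) (y : ℝ) : ‖z * ((_root_.sinc y : ℝ) : ℂ)‖ ≤ ‖z‖ := by
  rw [norm_mul, Complex.norm_real, Real.norm_eq_abs]
  exact mul_le_of_le_one_right (norm_nonneg z) (abs_sinc_le_one y)

lemma qf_nonneg (x : ℝ) : 0 ≤ qf x := by
  rcases le_total 0 x with hx | hx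
  · exact div_nonneg hx (arsinh_nonneg_iff.2 hx)
  · exact div_nonneg_of_nonpos hx (arsinh_nonpos_iff.2 hx)

lemma div_one_add_exp_rpow_le {R a b : ℝ} (hR : 0 ≤ R) (ha : 0 ≤ a) (hb : 0 ≤ b) (u : ℝ) :
    R / ((1 + exp (-u)) ^ a * (1 + exp u) ^ b) ≤ R * exp (-(b * u)) := by
  have hexp : exp (b * u) ≤ (1 + exp u) ^ b := by
    rw [mul_comm, exp_mul]
    exact rpow_le_rpow (exp_pos u).le (by linarith) hb
  have hone : 1 ≤ (1 + exp (-u)) ^ a := one_le_rpow (by linarith [exp_pos (-u)]) ha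
  rw [exp_neg (b * u), ← div_eq_mul_inv]
  gcongr
  calc exp (b * u) = 1 * exp (b * u) := (one_mul _).symm
    _ ≤ _ := mul_le_mul hone hexp (exp_pos _).le (by positivity)

namespace MemLDE

variable {L R α β d : ℝ} {F : ℂ → ℂ}

lemma norm_le_exp_neg (hF : MemLDE L R α β d F) (hR : 0 ≤ R) (hα : 0 ≤ α) (hβ : 0 ≤ β)
    (x : ℝ) : ‖F x‖ ≤ R * exp (-(π * β * sinh x)) :=
  (hF.bound_real x).trans <| (div_one_add_exp_rpow_le hR hα hβ _).trans_eq <| by ring_nf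

lemma norm_le_exp (hF : MemLDE L R α β d F) (hR : 0 ≤ R) (hα : 0 ≤ α) (hβ : 0 ≤ β)
    (x : ℝ) : ‖F x‖ ≤ R * exp (π * α * sinh x) := by
  have h := div_one_add_exp_rpow_le hR hβ hα (-(π * sinh x))
  rw [neg_neg, mul_comm] at h
  exact (hF.bound_real x).trans (h.trans_eq (by ring_nf))

end MemLDE

lemma sinh_add_mul_cosh_le {T t : ℝ} (hT : 0 ≤ T) (ht : 0 ≤ t) :
    sinh T + t * cosh T ≤ sinh (T + t) := by
  rw [sinh_add]
  have h1 : 1 ≤ cosh t := one_le_cosh t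
  have h2 : 0 ≤ sinh T := sinh_nonneg_iff.2 hT
  have h3 : t ≤ sinh t := self_le_sinh_iff.2 ht
  nlinarith [cosh_pos T]

lemma norm_tsum_le_of_le_exp_succ {A c : ℝ} (hc : 0 < c) (f : ℕ → ℂ)
    (hf : ∀ j : ℕ, ‖f j‖ ≤ A * exp (-(c * (j + 1)))) : ‖∑' j, f j‖ ≤ A / c := by
  set r := exp (-c)
  have hr0 : 0 ≤ r := (exp_pos _).le
  have hr1 : r < 1 := exp_lt_one_iff.2 (by linarith)
  have hgeom : ∀ j : ℕ, A * exp (-(c * (j + 1))) = A * r * r ^ j := by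
    intro j
    rw [← exp_nat_mul, mul_assoc, ← exp_add]
    ring_nf
  have hsum : Summable fun j : ℕ => A * r * r ^ j :=
    (summable_geometric_of_lt_one hr0 hr1).mul_left _
  have hf' : ∀ j, ‖f j‖ ≤ A * r * r ^ j := fun j => (hf j).trans_eq (hgeom j)
  have hA : 0 ≤ A := (mul_nonneg_iff_of_pos_right (exp_pos _)).1 ((norm_nonneg _).trans (by simpa using hf' 0))
  -- `r / (1 - r) = 1 / (exp c - 1) ≤ 1 / c` since `1 + c ≤ exp c`
  have hratio : r * (1 - r)⁻¹ ≤ c⁻¹ := by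
    have hcr : exp c * r = 1 := by rw [← exp_add]; simp
    rw [← div_eq_mul_inv, div_le_iff₀ (by linarith), ← div_eq_inv_mul, le_div_iff₀ hc]
    nlinarith [add_one_le_exp c]
  calc ‖∑' j, f j‖ ≤ ∑' j, A * r * r ^ j := tsum_of_norm_bounded hsum.hasSum hf'
    _ = A * (r * (1 - r)⁻¹) := by rw [tsum_mul_left, tsum_geometric_of_lt_one hr0 hr1, mul_assoc]
    _ ≤ A / c := by rw [div_eq_mul_inv]; gcongr

lemma norm_tsum_le_of_le_exp_neg_sinh {R c h T : ℝ} (hR : 0 ≤ R) (hc : 0 < c) (hh : 0 < h)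
    (hT : 0 ≤ T) (f : ℕ → ℂ) (hf : ∀ j : ℕ, ‖f j‖ ≤ R * exp (-(c * sinh (T + (j + 1) * h)))) :
    ‖∑' j, f j‖ ≤ R * exp (-(c * sinh T)) / (c * h * cosh T) := by
  have hchT : 0 < c * h * cosh T := by have := cosh_pos T; positivity
  refine norm_tsum_le_of_le_exp_succ hchT f fun j => (hf j).trans ?_
  have hsinh := sinh_add_mul_cosh_le hT (by positivity : (0 : ℝ) ≤ (j + 1) * h)
  calc R * exp (-(c * sinh (T + (j + 1) * h)))
      ≤ R * exp (-(c * (sinh T + (j + 1) * h * cosh T))) := by gcongr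
    _ = R * exp (-(c * sinh T)) * exp (-(c * h * cosh T * (j + 1))) := by
      rw [mul_assoc R, ← exp_add]
      ring_nf

def natEquivSubtypeLE (N : ℤ) : ℕ ≃ {k : ℤ // N ≤ k} where
  toFun j := ⟨N + j, by omega⟩
  invFun k := (k.1 - N).toNat
  left_inv j := by simp
  right_inv k := Subtype.ext (by have := k.2; simp only; omega)

lemma norm_tsum_subtype_le_of_le_exp_neg_sinh {R c h : ℝ} (hR : 0 ≤ R) (hc : 0 < c) (hh : 0 < h)
    {N : ℤ} (hN : 0 ≤ N) (g : ℤ → ℂ)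
    (hg : ∀ k : ℤ, N + 1 ≤ k → ‖g k‖ ≤ R * exp (-(c * sinh (k * h)))) :
    ‖∑' k : {k : ℤ // N + 1 ≤ k}, g k‖ ≤ R * exp (-(c * sinh (N * h))) / (c * h * cosh (N * h)) := by
  rw [← (natEquivSubtypeLE (N + 1)).tsum_eq]
  refine norm_tsum_le_of_le_exp_neg_sinh hR hc hh (by positivity) _ fun j => ?_
  refine (hg _ (natEquivSubtypeLE (N + 1) j).2).trans_eq ?_
  simp only [natEquivSubtypeLE, Equiv.coe_fn_mk, Int.cast_add, Int.cast_one, Int.cast_natCast]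
  ring_nf

lemma exp_neg_sinh_div_cosh_le {R c γ μ h q T : ℝ} (hR : 0 ≤ R) (hc : 0 < c) (hμ : 0 < μ)
    (hμγ : μ ≤ γ) (hh : 0 < h) (hq : 0 ≤ q) (hT : arsinh (μ / γ * q) ≤ T) :
    R * exp (-(c * γ * sinh T)) / (c * γ * h * cosh T) ≤
      R * exp (-(c * μ * q)) / (c * μ * h * √(1 + q ^ 2)) := by
  have hγ : 0 < γ := hμ.trans_le hμγ
  have hsinh : μ * q ≤ γ * sinh T := by
    have := sinh_le_sinh.2 hT
    rw [sinh_arsinh, div_mul_eq_mul_div, div_le_iff₀ hγ] at this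
    linarith
  -- `μ² (1 + q²) = μ² + (μq)² ≤ γ² + (γ sinh T)² = (γ cosh T)²`
  have hcosh : μ * √(1 + q ^ 2) ≤ γ * cosh T := by
    have hsq : (μ * √(1 + q ^ 2)) ^ 2 ≤ (γ * cosh T) ^ 2 := by
      rw [mul_pow, mul_pow, sq_sqrt (by positivity), cosh_sq']
      have hμq : 0 ≤ μ * q := by positivity
      nlinarith [mul_le_mul hμγ hμγ hμ.le hγ.le, mul_le_mul hsinh hsinh hμq (hμq.trans hsinh)]
    exact (pow_le_pow_iff_left₀ (by positivity) (by have := cosh_pos T; positivity) two_ne_zero).1 hsq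
  have hden : 0 < c * μ * h * √(1 + q ^ 2) := by
    have : 0 < √(1 + q ^ 2) := sqrt_pos.2 (by positivity)
    positivity
  have hnum : exp (-(c * γ * sinh T)) ≤ exp (-(c * μ * q)) := by
    refine exp_le_exp.2 (neg_le_neg ?_)
    rw [mul_assoc, mul_assoc]
    exact mul_le_mul_of_nonneg_left hsinh hc.le
  calc R * exp (-(c * γ * sinh T)) / (c * γ * h * cosh T)
      ≤ R * exp (-(c * μ * q)) / (c * h * (γ * cosh T)) := by
        rw [show c * γ * h * cosh T = c * h * (γ * cosh T) by ring]; gcongr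
    _ ≤ R * exp (-(c * μ * q)) / (c * h * (μ * √(1 + q ^ 2))) := by gcongr
    _ = _ := by ring_nf

lemma norm_tsum_tail_le {R c γ μ h q : ℝ} (hR : 0 ≤ R) (hc : 0 < c) (hμ : 0 < μ) (hμγ : μ ≤ γ)
    (hh : 0 < h) (hq : 0 ≤ q) (g : ℤ → ℂ)
    (hg : ∀ k : ℤ, ‖g k‖ ≤ R * exp (-(c * γ * sinh (k * h)))) :
    ‖∑' k : {k : ℤ // ⌈1 / h * arsinh (μ / γ * q)⌉ + 1 ≤ k}, g k‖ ≤
      R * exp (-(c * μ * q)) / (c * μ * h * √(1 + q ^ 2)) := by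
  have hγ : 0 < γ := hμ.trans_le hμγ
  have harsinh : 0 ≤ arsinh (μ / γ * q) := arsinh_nonneg_iff.2 (by positivity)
  have hceil : arsinh (μ / γ * q) ≤ ⌈1 / h * arsinh (μ / γ * q)⌉ * h := by
    rw [← div_le_iff₀ hh, div_eq_inv_mul, ← one_div]
    exact Int.le_ceil _
  exact (norm_tsum_subtype_le_of_le_exp_neg_sinh hR (mul_pos hc hγ) hh
    (Int.ceil_nonneg (by positivity)) g fun k _ => hg k).trans
    (exp_neg_sinh_div_cosh_le hR hc hμ hμγ hh hq hceil)

theorem stmt4_general (L R α β d : ℝ) (hR : 0 < R) (hα : 0 < α) (hβ : 0 < β)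
    (F : ℂ → ℂ) (hF : MemLDE L R α β d F)
    (μ : ℝ) (hμ : μ = min α β)
    (n : ℕ)
    (h : ℝ) (hh : 0 < h)
    (M N : ℤ)
    (hM : M = ⌈(1 / h) * Real.arsinh ((μ / α) * qf (d * n / μ))⌉)
    (hN : N = ⌈(1 / h) * Real.arsinh ((μ / β) * qf (d * n / μ))⌉) :
    ∀ x : ℝ,
      ‖((∑' k : {k : ℤ // k ≤ -M - 1},
              F (((k : ℝ) * h : ℝ) : ℂ) * ((_root_.sinc ((x - (k : ℝ) * h) / h) : ℝ) : ℂ)) +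
           (∑' k : {k : ℤ // N + 1 ≤ k},
              F (((k : ℝ) * h : ℝ) : ℂ) * ((_root_.sinc ((x - (k : ℝ) * h) / h) : ℝ) : ℂ)))‖ ≤
      (2 * R / (π * μ * h * Real.sqrt (1 + qf (d * n / μ) ^ 2))) *
        Real.exp (-(π * μ * qf (d * n / μ))) := by
  intro x
  set q := qf (d * n / μ)
  have hq : 0 ≤ q := qf_nonneg _
  set g : ℤ → ℂ := fun k => F (((k : ℝ) * h : ℝ) : ℂ) * ((_root_.sinc ((x - k * h) / h) : ℝ) : ℂ)
  obtain ⟨hμ0, hμα, hμβ⟩ : 0 < μ ∧ μ ≤ α ∧ μ ≤ β :=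
    hμ ▸ ⟨lt_min hα hβ, min_le_left α β, min_le_right α β⟩
  have hleft := norm_tsum_tail_le hR.le pi_pos hμ0 hμα hh hq (fun k => g (-k)) fun k =>
    (norm_mul_sinc_le _ _).trans <| (hF.norm_le_exp hR.le hα.le hβ.le _).trans_eq <| by
      push_cast; rw [neg_mul, sinh_neg]; ring_nf
  have hright := norm_tsum_tail_le hR.le pi_pos hμ0 hμβ hh hq g fun k =>
    (norm_mul_sinc_le _ _).trans (hF.norm_le_exp_neg hR.le hα.le hβ.le _)
  rw [← hM] at hleft
  rw [← hN] at hright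
  have hreflect : ∑' k : {k : ℤ // k ≤ -M - 1}, g k = ∑' k : {k : ℤ // M + 1 ≤ k}, g (-k) :=
    ((Equiv.neg ℤ).subtypeEquiv fun k => by simp only [Equiv.neg_apply]; omega).tsum_eq _ |>.symm
  calc _ ≤ ‖∑' k : {k : ℤ // M + 1 ≤ k}, g (-k)‖ + ‖∑' k : {k : ℤ // N + 1 ≤ k}, g k‖ :=
        hreflect ▸ norm_add_le _ _
    _ ≤ _ := add_le_add hleft hright
    _ = _ := by ring

theorem stmt4 (L R α β d : ℝ) (hL : 0 < L) (hR : 0 < R) (hα : 0 < α) (hβ : 0 < β)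
    (hd0 : 0 < d) (hd : d < π / 2) (F : ℂ → ℂ) (hF : MemLDE L R α β d F)
    (μ : ℝ) (hμ : μ = min α β)
    (n : ℕ) (hn : 0 < n)
    (h : ℝ) (hh : 0 < h)
    (M N : ℤ)
    (hM : M = ⌈(1 / h) * Real.arsinh ((μ / α) * qf (d * n / μ))⌉)
    (hN : N = ⌈(1 / h) * Real.arsinh ((μ / β) * qf (d * n / μ))⌉) :
    ∀ x : ℝ,
      ‖((∑' k : {k : ℤ // k ≤ -M - 1},
              F (((k : ℝ) * h : ℝ) : ℂ) * ((_root_.sinc ((x - (k : ℝ) * h) / h) : ℝ) : ℂ)) +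
           (∑' k : {k : ℤ // N + 1 ≤ k},
              F (((k : ℝ) * h : ℝ) : ℂ) * ((_root_.sinc ((x - (k : ℝ) * h) / h) : ℝ) : ℂ)))‖ ≤
      (2 * R / (π * μ * h * Real.sqrt (1 + qf (d * n / μ) ^ 2))) *
        Real.exp (-(π * μ * qf (d * n / μ))) :=
  stmt4_general L R α β d hR hα hβ F hF μ hμ n h hh M N hM hN
end

section
/- The functions p(x) = x/arsinh(x/arsinh x) and r(x) = p(x) − q(x), where q(x) = x/arsinh x, are monotonically increasing for x > 0; that is, for all real x, y with 0 < x ≤ y one has p(x) ≤ p(y) and p(x) − q(x) ≤ p(y) − q(y). -/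
/-!
With `a = arsinh x`, `S = √(1 + x²)`, `b = arsinh q(x)`, `T = √(1 + q(x)²)` one has
`q' = (a S - x) / (a² S)` and `p' = (b - x q' / T) / b²`. Writing `x = sinh a`, `S = cosh a`,
everything rests on `sinh a ≤ a cosh a` and `a cosh a - sinh a ≤ a³ cosh a / 3` for `a ≥ 0`.
The first gives `x q' ≤ q ≤ b T`, hence `p' ≥ 0`. Cleared of denominators, `q' ≤ p'` reads
`(a S - x) (b² T + x) ≤ a² b S T`. For `x ≤ sinh 1` both `a, b ≤ 1` and the cubic bound suffices;
for `x ≥ sinh 1` one has `1 ≤ b ≤ a`, `x / S ∈ [1/2, 1]`, `S ≤ a T`, and the inequality becomes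
a polynomial one that is concave in `b`.
-/

open Real

theorem monotoneOn_of_hasDerivAt_nonneg {D : Set ℝ} (hD : Convex ℝ D) {f f' : ℝ → ℝ}
    (hf : ∀ x ∈ D, HasDerivAt f (f' x) x) (hf'₀ : ∀ x ∈ interior D, 0 ≤ f' x) :
    MonotoneOn f D :=
  monotoneOn_of_hasDerivWithinAt_nonneg hD
    (fun x hx ↦ (hf x hx).continuousAt.continuousWithinAt)
    (fun x hx ↦ (hf x (interior_subset hx)).hasDerivWithinAt) hf'₀

namespace Real

theorem sinh_le_mul_cosh {a : ℝ} (ha : 0 ≤ a) : sinh a ≤ a * cosh a := by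
  have hmono : MonotoneOn (fun t ↦ t * cosh t - sinh t) (Set.Ici 0) := by
    refine monotoneOn_of_hasDerivAt_nonneg (convex_Ici 0) (fun t _ ↦
      (((hasDerivAt_id' t).mul (hasDerivAt_cosh t)).sub (hasDerivAt_sinh t)).congr_deriv
        (by ring : _ = t * sinh t)) fun t ht ↦ ?_
    rw [interior_Ici] at ht
    exact mul_nonneg ht.le (sinh_nonneg_iff.2 ht.le)
  simpa using hmono Set.self_mem_Ici ha ha

theorem mul_cosh_sub_sinh_le {a : ℝ} (ha : 0 ≤ a) :
    a * cosh a - sinh a ≤ a ^ 3 / 3 * cosh a := by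
  have hmono : MonotoneOn (fun t ↦ t ^ 3 / 3 * cosh t - (t * cosh t - sinh t)) (Set.Ici 0) := by
    refine monotoneOn_of_hasDerivAt_nonneg (convex_Ici 0) (fun t _ ↦
      ((((hasDerivAt_pow 3 t).div_const 3).mul (hasDerivAt_cosh t)).sub
        (((hasDerivAt_id' t).mul (hasDerivAt_cosh t)).sub (hasDerivAt_sinh t))).congr_deriv
        (by push_cast; ring : _ = t * (t * cosh t - sinh t) + t ^ 3 / 3 * sinh t)) fun t ht ↦ ?_
    rw [interior_Ici] at ht
    have ht : 0 ≤ t := le_of_lt ht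
    have := sub_nonneg.2 (sinh_le_mul_cosh ht)
    have := sinh_nonneg_iff.2 ht
    positivity
  simpa using hmono Set.self_mem_Ici ha ha

theorem le_arsinh_mul_sqrt {x : ℝ} (hx : 0 ≤ x) : x ≤ arsinh x * √(1 + x ^ 2) := by
  simpa [sinh_arsinh, cosh_arsinh] using sinh_le_mul_cosh (arsinh_nonneg_iff.2 hx)

theorem arsinh_mul_sqrt_sub_le {x : ℝ} (hx : 0 ≤ x) :
    arsinh x * √(1 + x ^ 2) - x ≤ arsinh x ^ 3 / 3 * √(1 + x ^ 2) := by
  simpa [sinh_arsinh, cosh_arsinh] using mul_cosh_sub_sinh_le (arsinh_nonneg_iff.2 hx)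

end Real

section KeyInequality

variable {x a b S T : ℝ}

theorem key_ineq_of_le_one (hx : 0 ≤ x) (ha : 0 < a) (ha1 : a ≤ 1) (hb : 0 < b) (hb1 : b ≤ 1)
    (hS : 0 < S) (hT : 0 < T) (hcubic : a * S - x ≤ a ^ 3 / 3 * S) (hxabT : x ≤ a * (b * T)) :
    (a * S - x) * (b ^ 2 * T + x) ≤ a ^ 2 * b * S * T :=
  calc (a * S - x) * (b ^ 2 * T + x)
      ≤ a ^ 3 / 3 * S * ((1 + a) * (b * T)) := by
        gcongr ?_ * ?_
        nlinarith [mul_le_mul_of_nonneg_right hb1 (mul_pos hb hT).le]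
    _ = a ^ 2 * b * S * T * (a * (1 + a) / 3) := by ring
    _ ≤ a ^ 2 * b * S * T := by
        apply mul_le_of_le_one_right (by positivity)
        nlinarith

theorem sub_mul_sq_add_mul_le {s : ℝ} (ha : 1 ≤ a) (hb : 1 ≤ b) (hba : b ≤ a)
    (hs : 1 / 2 ≤ s) (hs1 : s ≤ 1) : (a - s) * (b ^ 2 + a * s) ≤ a ^ 2 * b := by
  have h1 : (a - s) * (1 + a * s) ≤ a ^ 2 := by
    nlinarith [mul_nonneg (sub_nonneg.2 hs1) (sq_nonneg (a - (1 + s) / 2)),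
      mul_nonneg (mul_nonneg (sub_nonneg.2 hs1) (sub_nonneg.2 hs)) (sub_nonneg.2 hs)]
  -- the difference of the two sides is concave in `b`: compare it with its value at `b = 1` or `b = a`
  rcases le_total ((a - s) * (b + 1)) (a ^ 2) with h | h
  · nlinarith [mul_nonneg (sub_nonneg.2 hb) (sub_nonneg.2 h)]
  · nlinarith [mul_nonneg (sub_nonneg.2 hba) (sub_nonneg.2 h),
      mul_nonneg (sub_nonneg.2 hba) (mul_nonneg (sub_nonneg.2 (hs1.trans ha)) (sub_nonneg.2 ha)),
      mul_nonneg (zero_le_one.trans ha) (sq_nonneg s)]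

theorem key_ineq_of_one_le (hx : 0 < x) (ha1 : 1 ≤ a) (hb1 : 1 ≤ b) (hba : b ≤ a)
    (hT : 0 < T) (hxS : x ≤ S) (hSx : S ≤ 2 * x) (hSaT : S ≤ a * T) :
    (a * S - x) * (b ^ 2 * T + x) ≤ a ^ 2 * b * S * T := by
  have hS : 0 < S := hx.trans_le hxS
  obtain ⟨s, rfl⟩ : ∃ s, x = s * S := ⟨x / S, by field_simp⟩
  have hs : 0 < s := pos_of_mul_pos_left hx hS.le
  have hs1 : s ≤ 1 := by nlinarith
  have hs2 : 1 / 2 ≤ s := by nlinarith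
  calc (a * S - s * S) * (b ^ 2 * T + s * S)
      = S * ((a - s) * (b ^ 2 * T + s * S)) := by ring
    _ ≤ S * ((a - s) * (b ^ 2 * T + s * (a * T))) := by
        have : 0 ≤ a - s := by linarith
        gcongr
    _ = S * T * ((a - s) * (b ^ 2 + a * s)) := by ring
    _ ≤ S * T * (a ^ 2 * b) :=
        mul_le_mul_of_nonneg_left (sub_mul_sq_add_mul_le ha1 hb1 hba hs2 hs1) (by positivity)
    _ = a ^ 2 * b * S * T := by ring

end KeyInequality

section Derivatives

variable {x : ℝ}

theorem hasDerivAt_qf (hx : x ≠ 0) :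
    HasDerivAt qf ((arsinh x * √(1 + x ^ 2) - x) / (arsinh x ^ 2 * √(1 + x ^ 2))) x := by
  have ha : arsinh x ≠ 0 := arsinh_eq_zero_iff.not.2 hx
  refine ((hasDerivAt_id' x).div (hasDerivAt_arsinh x) ha).congr_deriv ?_
  field_simp

theorem hasDerivAt_pf (hx : 0 < x) :
    HasDerivAt pf ((arsinh (qf x) - x * deriv qf x / √(1 + qf x ^ 2)) / arsinh (qf x) ^ 2) x := by
  have hb : arsinh (qf x) ≠ 0 := (arsinh_pos_iff.2 (div_pos hx (arsinh_pos_iff.2 hx))).ne'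
  refine ((hasDerivAt_id' x).div
    (hasDerivAt_qf hx.ne').differentiableAt.hasDerivAt.arsinh hb).congr_deriv ?_
  rw [smul_eq_mul]
  ring

theorem monotoneOn_qf : MonotoneOn qf (Set.Ioi 0) :=
  monotoneOn_of_hasDerivAt_nonneg (convex_Ioi 0) (fun x hx ↦ hasDerivAt_qf (ne_of_gt hx))
    fun x hx ↦ by
      rw [interior_Ioi] at hx
      have := sub_nonneg.2 (le_arsinh_mul_sqrt (le_of_lt hx))
      positivity

theorem qf_sinh_one : qf (sinh 1) = sinh 1 := by
  simp [qf, arsinh_sinh]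

theorem arsinh_qf_le_one (hx : 0 < x) (ha : arsinh x ≤ 1) : arsinh (qf x) ≤ 1 := by
  have hx1 : x ≤ sinh 1 := by rwa [← arsinh_le_arsinh, arsinh_sinh]
  have hq := monotoneOn_qf hx (hx.trans_le hx1) hx1
  rwa [qf_sinh_one, ← arsinh_le_arsinh, arsinh_sinh] at hq

theorem one_le_arsinh_qf (ha : 1 ≤ arsinh x) : 1 ≤ arsinh (qf x) := by
  have hx1 : sinh 1 ≤ x := by rwa [← arsinh_le_arsinh, arsinh_sinh]
  have hq := monotoneOn_qf (sinh_pos_iff.2 one_pos) ((sinh_pos_iff.2 one_pos).trans_le hx1) hx1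
  rwa [qf_sinh_one, ← arsinh_le_arsinh, arsinh_sinh] at hq

theorem mul_deriv_qf_le (hx : 0 < x) : x * deriv qf x ≤ qf x := by
  have ha := arsinh_pos_iff.2 hx
  rw [(hasDerivAt_qf hx.ne').deriv, qf, mul_div_assoc', div_le_div_iff₀ (by positivity) ha]
  nlinarith [mul_pos (mul_pos hx hx) ha]

theorem deriv_pf_nonneg (hx : 0 < x) : 0 ≤ deriv pf x := by
  rw [(hasDerivAt_pf hx).deriv]
  refine div_nonneg ?_ (sq_nonneg _)
  rw [sub_nonneg, div_le_iff₀ (by positivity)]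
  exact (mul_deriv_qf_le hx).trans (le_arsinh_mul_sqrt (div_pos hx (arsinh_pos_iff.2 hx)).le)

theorem key_ineq (hx : 0 < x) :
    (arsinh x * √(1 + x ^ 2) - x) * (arsinh (qf x) ^ 2 * √(1 + qf x ^ 2) + x) ≤
      arsinh x ^ 2 * arsinh (qf x) * √(1 + x ^ 2) * √(1 + qf x ^ 2) := by
  have ha := arsinh_pos_iff.2 hx
  have hq : 0 < qf x := div_pos hx ha
  have hqa : x = arsinh x * qf x := by rw [qf]; field_simp
  rcases le_total (arsinh x) 1 with ha1 | ha1
  · refine key_ineq_of_le_one hx.le ha ha1 (arsinh_pos_iff.2 hq) (arsinh_qf_le_one hx ha1)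
      (by positivity) (by positivity) (arsinh_mul_sqrt_sub_le hx.le) ?_
    exact hqa.le.trans (mul_le_mul_of_nonneg_left (le_arsinh_mul_sqrt hq.le) ha.le)
  · have hx1 : 1 ≤ x := by
      calc (1 : ℝ) ≤ sinh 1 := self_le_sinh_iff.2 zero_le_one
        _ ≤ x := by rwa [← arsinh_le_arsinh, arsinh_sinh]
    refine key_ineq_of_one_le hx ha1 (one_le_arsinh_qf ha1) ?_ (by positivity) ?_ ?_ ?_
    · exact arsinh_le_arsinh.2 (div_le_self hx.le ha1)
    · exact (le_sqrt hx.le (by positivity)).2 (by linarith)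
    · exact sqrt_le_iff.2 ⟨by positivity, by nlinarith⟩
    · refine sqrt_le_iff.2 ⟨by positivity, ?_⟩
      rw [mul_pow, sq_sqrt (by positivity), mul_add, mul_one, ← mul_pow, ← hqa]
      nlinarith

theorem deriv_qf_le_deriv_pf (hx : 0 < x) : deriv qf x ≤ deriv pf x := by
  have ha := arsinh_pos_iff.2 hx
  have hb : 0 < arsinh (qf x) := arsinh_pos_iff.2 (div_pos hx ha)
  have hT : 0 < √(1 + qf x ^ 2) := by positivity
  have hcleared : deriv qf x * (arsinh (qf x) ^ 2 * √(1 + qf x ^ 2) + x) ≤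
      arsinh (qf x) * √(1 + qf x ^ 2) := by
    rw [(hasDerivAt_qf hx.ne').deriv, div_mul_eq_mul_div, div_le_iff₀ (by positivity)]
    linarith [key_ineq hx]
  rw [(hasDerivAt_pf hx).deriv, le_div_iff₀ (by positivity), le_sub_iff_add_le]
  calc deriv qf x * arsinh (qf x) ^ 2 + x * deriv qf x / √(1 + qf x ^ 2)
      = deriv qf x * (arsinh (qf x) ^ 2 * √(1 + qf x ^ 2) + x) / √(1 + qf x ^ 2) := by
        field_simp
    _ ≤ arsinh (qf x) := by rwa [div_le_iff₀ hT]

theorem monotoneOn_pf : MonotoneOn pf (Set.Ioi 0) :=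
  monotoneOn_of_hasDerivAt_nonneg (convex_Ioi 0)
    (fun x hx ↦ (hasDerivAt_pf hx).differentiableAt.hasDerivAt) fun x hx ↦ by
      rw [interior_Ioi] at hx
      exact deriv_pf_nonneg hx

theorem monotoneOn_pf_sub_qf : MonotoneOn (fun x ↦ pf x - qf x) (Set.Ioi 0) :=
  monotoneOn_of_hasDerivAt_nonneg (convex_Ioi 0)
    (fun x hx ↦ (hasDerivAt_pf hx).differentiableAt.hasDerivAt.sub
      (hasDerivAt_qf (ne_of_gt hx)).differentiableAt.hasDerivAt) fun x hx ↦ by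
      rw [interior_Ioi] at hx
      exact sub_nonneg.2 (deriv_qf_le_deriv_pf hx)

end Derivatives

theorem stmt5 :
    ∀ x y : ℝ, 0 < x → x ≤ y →
      pf x ≤ pf y ∧ pf x - qf x ≤ pf y - qf y := by
  intro x y hx hxy
  have hy : y ∈ Set.Ioi 0 := hx.trans_le hxy
  exact ⟨monotoneOn_pf hx hy hxy, monotoneOn_pf_sub_qf hx hy hxy⟩
end

section
/- For all real t ≥ 0, sinh t ≥ t·sinh(2t/π). -/
/-!
Write `a = 2/π`. Both sides are power series with nonnegative terms:
`t sinh (a t) = ∑ a^(2k+1) t^(2k+2) / (2k+1)!` has only even powers, `sinh t = ∑ t^(2k+1) / (2k+1)!`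
only odd ones. Split the odd term `u k` of `sinh t` as `θ k * u k + (1 - θ k) * u k` with
`θ 0 = 1`; by AM-GM the even term `x k` is at most `θ k * u k + (1 - θ (k+1)) * u (k+1)` as soon as
`x k ^ 2 ≤ 4 θ k (1 - θ (k+1)) u k u (k+1)`, and summing over `k` telescopes back to `sinh t`.
The condition reads `a^(4k+2) (2k+2)(2k+3) ≤ 4 θ k (1 - θ (k+1))`, independent of `t`; it is a
finite check for `k ≤ 3` and follows for larger `k` because the left side decreases in `k`.
-/

open Real Nat

theorem hasSum_le_of_sq_le_mul_succ {x u θ : ℕ → ℝ} {s S : ℝ} (hx : HasSum x s)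
    (hu : HasSum u S) (hu0 : ∀ k, 0 ≤ u k) (hθ : ∀ k, θ k ∈ Set.Icc (0 : ℝ) 1) (hθ0 : θ 0 = 1)
    (hx_sq : ∀ k, x k ^ 2 ≤ 4 * (θ k * u k) * ((1 - θ (k + 1)) * u (k + 1))) : s ≤ S := by
  set v : ℕ → ℝ := fun k ↦ θ k * u k
  set w : ℕ → ℝ := fun k ↦ (1 - θ k) * u k
  have hv0 : ∀ k, 0 ≤ v k := fun k ↦ mul_nonneg (hθ k).1 (hu0 k)
  have hw0 : ∀ k, 0 ≤ w k := fun k ↦ mul_nonneg (sub_nonneg.2 (hθ k).2) (hu0 k)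
  have hv : Summable v := hu.summable.of_nonneg_of_le hv0 fun k ↦ by
    simpa [v] using mul_le_of_le_one_left (hu0 k) (hθ k).2
  have hw : Summable w := (hu.summable.sub hv).congr fun k ↦ by simp only [v, w]; ring
  have hw_shift : HasSum (fun k ↦ w (k + 1)) (∑' k, w k) := by
    simpa [w, hθ0] using (hasSum_nat_add_iff' 1).2 hw.hasSum
  have hsum : HasSum (fun k ↦ v k + w (k + 1)) S := by
    convert hv.hasSum.add hw_shift using 1
    rw [← hv.tsum_add hw, ← hu.tsum_eq]
    exact tsum_congr fun k ↦ by simp only [v, w]; ring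
  refine hasSum_le (fun k ↦ ?_) hx hsum
  have := hx_sq k
  nlinarith [sq_nonneg (v k - w (k + 1)), hv0 k, hw0 (k + 1)]

/- Chosen backwards from `θ k = 1/2` for `k ≥ 4` so that `pow_mul_succ_mul_succ_le_sinhWeight`
holds for `a = 100/157`; the cases `k = 0, 1` leave `θ 1` only the window `[0.381, 0.391]`. -/
noncomputable def sinhWeight : ℕ → ℝ
  | 0 => 1
  | 1 => 5 / 13
  | 2 => 1 / 8
  | 3 => 1 / 15
  | _ + 4 => 1 / 2

lemma sinhWeight_mem_Icc (k : ℕ) : sinhWeight k ∈ Set.Icc (0 : ℝ) 1 := by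
  match k with
  | 0 | 1 | 2 | 3 => norm_num [sinhWeight]
  | _ + 4 => norm_num [sinhWeight]

lemma pow_mul_succ_mul_succ_antitone {a : ℝ} (ha0 : 0 ≤ a) (ha : a ^ 4 ≤ 1 / 6) :
    Antitone fun k : ℕ ↦ a ^ (4 * k + 2) * ((2 * k + 2) * (2 * k + 3)) := by
  refine antitone_nat_of_succ_le fun k ↦ ?_
  have hk : (0 : ℝ) ≤ k := k.cast_nonneg
  have hpow : a ^ (4 * (k + 1) + 2) = a ^ 4 * a ^ (4 * k + 2) := by ring
  push_cast
  rw [hpow]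
  have hX := pow_nonneg ha0 (4 * k + 2)
  have hpoly : (0 : ℝ) ≤ (2 * (k + 1) + 2) * (2 * (k + 1) + 3) := by positivity
  nlinarith [mul_le_mul_of_nonneg_right (mul_le_mul_of_nonneg_right ha hX) hpoly,
    mul_nonneg hX hk, mul_nonneg hX (mul_nonneg hk hk)]

lemma pow_mul_succ_mul_succ_le_sinhWeight {a : ℝ} (ha0 : 0 ≤ a) (ha : a ≤ 100 / 157) (k : ℕ) :
    a ^ (4 * k + 2) * ((2 * k + 2) * (2 * k + 3)) ≤
      4 * sinhWeight k * (1 - sinhWeight (k + 1)) := by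
  have hpow (n : ℕ) : a ^ n ≤ (100 / 157) ^ n := pow_le_pow_left₀ ha0 ha n
  match k with
  | 0 => norm_num [sinhWeight]; linarith [hpow 2]
  | 1 => norm_num [sinhWeight]; linarith [hpow 6]
  | 2 => norm_num [sinhWeight]; linarith [hpow 10]
  | 3 => norm_num [sinhWeight]; linarith [hpow 14]
  | k + 4 =>
    have h4 : a ^ 4 ≤ 1 / 6 := (hpow 4).trans (by norm_num)
    have := pow_mul_succ_mul_succ_antitone ha0 h4 (show 4 ≤ k + 4 by omega)
    norm_num [sinhWeight] at this ⊢
    linarith [hpow 18]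

lemma sq_mul_sinh_term (a t : ℝ) (k : ℕ) :
    (t * ((a * t) ^ (2 * k + 1) / (2 * k + 1)!)) ^ 2 =
      a ^ (4 * k + 2) * ((2 * k + 2) * (2 * k + 3)) *
        (t ^ (2 * k + 1) / (2 * k + 1)! * (t ^ (2 * (k + 1) + 1) / (2 * (k + 1) + 1)!)) := by
  have hfact : (2 * (k + 1) + 1)! = (2 * k + 3) * ((2 * k + 2) * (2 * k + 1)!) := by
    rw [show 2 * (k + 1) + 1 = 2 * k + 1 + 1 + 1 by ring, Nat.factorial_succ, Nat.factorial_succ]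
  rw [hfact]
  push_cast
  field_simp
  ring

lemma mul_sinh_mul_le_sinh {a t : ℝ} (ha0 : 0 ≤ a) (ha : a ≤ 100 / 157) (ht : 0 ≤ t) :
    t * sinh (a * t) ≤ sinh t := by
  refine hasSum_le_of_sq_le_mul_succ ((hasSum_sinh (a * t)).mul_left t) (hasSum_sinh t)
    (fun k ↦ by positivity) sinhWeight_mem_Icc rfl fun k ↦ ?_
  rw [sq_mul_sinh_term]
  have huu : 0 ≤ t ^ (2 * k + 1) / (2 * k + 1)! * (t ^ (2 * (k + 1) + 1) / (2 * (k + 1) + 1)!) := by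
    positivity
  nlinarith [mul_le_mul_of_nonneg_right (pow_mul_succ_mul_succ_le_sinhWeight ha0 ha k) huu]

theorem stmt6 : ∀ t : ℝ, 0 ≤ t → t * Real.sinh (2 * t / π) ≤ Real.sinh t := by
  intro t ht
  have ha : 2 / π ≤ 100 / 157 := by
    rw [div_le_div_iff₀ pi_pos (by norm_num)]
    linarith [pi_gt_d2]
  simpa [div_mul_eq_mul_div] using mul_sinh_mul_le_sinh (by positivity) ha ht
end

section
/- For all real x > 0, arsinh(x) ≤ (π/2)·arsinh(x/arsinh x); equivalently, arsinh(x)/arsinh(q(x)) ≤ π/2 where q(x) = x/arsinh x. -/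
open Real

/-! With `a = arsinh x` the claim reads `sinh (2a/π) ≤ sinh a / a`, so it suffices to show
`a sinh (c a) ≤ sinh a` for `a ≥ 0` and the rational `c = 0.6367 ≥ 2/π`. Writing `k = 1 - c`,
`sinh a - a sinh (c a) = sinh (c a) (exp (k a) - a) + sinh (k a) exp (-c a)`.
For `a ≥ 3.3` both terms are nonnegative because `a ≤ exp (k a)` there. For `a ≤ 3.3` one only
has `a - exp (k a) ≤ 0.035` (a tangent bound near the maximum at `a = -log k / k ≈ 2.79`), and the
second term still wins: `sinh (k a) ≥ k a`, while by convexity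
`exp (2 c a) - 1 ≤ (a / 3.3) (exp (6.6 c) - 1)`. -/

namespace Real

theorem sinh_add_eq_sinh_mul_exp_add (x y : ℝ) :
    sinh (x + y) = sinh x * exp y + sinh y * exp (-x) := by
  simp only [sinh_eq, exp_add, exp_neg]
  field_simp
  ring

theorem exp_mul_one_add_sub_le_exp (t x : ℝ) : exp t * (1 + (x - t)) ≤ exp x := by
  calc exp t * (1 + (x - t)) ≤ exp t * exp (x - t) := by
        gcongr; linarith [add_one_le_exp (x - t)]
    _ = exp x := by rw [← exp_add]; ring_nf

theorem exp_mul_sub_one_le {t : ℝ} (ht₀ : 0 ≤ t) (ht₁ : t ≤ 1) (x : ℝ) :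
    exp (t * x) - 1 ≤ t * (exp x - 1) := by
  have := convexOn_exp.2 (Set.mem_univ x) (Set.mem_univ 0) ht₀ (sub_nonneg.2 ht₁) (by ring)
  simp only [smul_eq_mul, mul_zero, add_zero, exp_zero, mul_one] at this
  linarith

theorem mul_sinh_mul_le_sinh_of_sub_exp_le {a c D : ℝ} (ha : 0 ≤ a) (hc : 0 ≤ c)
    (hD : a - exp ((1 - c) * a) ≤ D)
    (h : D * (exp (2 * (c * a)) - 1) ≤ 2 * sinh ((1 - c) * a)) :
    a * sinh (c * a) ≤ sinh a := by
  have hsplit := sinh_add_eq_sinh_mul_exp_add (c * a) ((1 - c) * a)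
  rw [show c * a + (1 - c) * a = a by ring] at hsplit
  have hsinh : sinh (c * a) = exp (-(c * a)) * (exp (2 * (c * a)) - 1) / 2 := by
    rw [sinh_eq, show 2 * (c * a) = c * a + c * a by ring, exp_add, exp_neg]
    field_simp
  have hpos : 0 ≤ sinh (c * a) := sinh_nonneg_iff.2 (mul_nonneg hc ha)
  have h₁ := mul_le_mul_of_nonneg_left hD hpos
  have h₂ := mul_le_mul_of_nonneg_left h (exp_pos (-(c * a))).le
  calc a * sinh (c * a)
      ≤ a * sinh (c * a) + (exp (-(c * a)) * (2 * sinh ((1 - c) * a))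
          - exp (-(c * a)) * (D * (exp (2 * (c * a)) - 1))) / 2 := by linarith
    _ = sinh (c * a) * (a - D) + sinh ((1 - c) * a) * exp (-(c * a)) := by rw [hsinh]; ring
    _ ≤ sinh a := by rw [hsplit]; linarith

theorem sub_exp_mul_le {a : ℝ} (ha : 0 ≤ a) : a - exp (3633 / 10000 * a) ≤ 7 / 200 := by
  have he : exp (10127 / 10000) = exp 1 * exp (127 / 10000) := by rw [← exp_add]; norm_num
  have hlo : 10000 / 3633 ≤ exp (10127 / 10000) := by
    rw [he]
    nlinarith [exp_one_gt_d9, add_one_le_exp (127 / 10000 : ℝ), exp_pos 1]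
  have hhi : exp (10127 / 10000) ≤ 551 / 200 := by
    rw [he]
    have := exp_bound_div_one_sub_of_interval' (x := 127 / 10000) (by norm_num) (by norm_num)
    nlinarith [exp_one_lt_d9, exp_pos (127 / 10000 : ℝ), exp_pos 1]
  have := exp_mul_one_add_sub_le_exp (10127 / 10000) (3633 / 10000 * a)
  nlinarith [mul_nonneg ha (sub_nonneg.2 hlo)]

theorem le_exp_mul_of_le {a : ℝ} (ha : 33 / 10 ≤ a) : a ≤ exp (3633 / 10000 * a) := by
  have he : exp (3633 / 10000 * (33 / 10)) = exp 1 * exp (19889 / 100000) := by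
    rw [← exp_add]; norm_num
  have hlo : 33 / 10 ≤ exp (3633 / 10000 * (33 / 10)) := by
    rw [he]
    nlinarith [exp_one_gt_d9, quadratic_le_exp_of_nonneg (x := 19889 / 100000) (by norm_num),
      exp_pos 1]
  have := exp_mul_one_add_sub_le_exp (3633 / 10000 * (33 / 10)) (3633 / 10000 * a)
  nlinarith [mul_nonneg (sub_nonneg.2 ha) (sub_nonneg.2 hlo)]

theorem mul_sinh_mul_le_sinh_of_le {a : ℝ} (ha : 0 ≤ a) (hle : a ≤ 33 / 10) :
    a * sinh (6367 / 10000 * a) ≤ sinh a := by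
  have hk : (1 : ℝ) - 6367 / 10000 = 3633 / 10000 := by norm_num
  refine mul_sinh_mul_le_sinh_of_sub_exp_le (D := 7 / 200) ha (by norm_num)
    (hk ▸ sub_exp_mul_le ha) ?_
  have hend : exp (2 * (6367 / 10000 * (33 / 10))) ≤ 6844 / 100 := by
    have he : exp (2 * (6367 / 10000 * (33 / 10))) = exp 1 ^ 4 * exp (20222 / 100000) := by
      rw [← exp_nat_mul, ← exp_add]; norm_num
    have h4 : exp 1 ^ 4 ≤ 2.7182818286 ^ 4 := by gcongr; exact exp_one_lt_d9.le
    have := exp_bound_div_one_sub_of_interval' (x := 20222 / 100000) (by norm_num) (by norm_num)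
    rw [he]
    nlinarith [exp_pos (20222 / 100000 : ℝ), pow_pos (exp_pos 1) 4]
  have hchord := exp_mul_sub_one_le (t := a / (33 / 10)) (by positivity)
    ((div_le_one (by norm_num)).2 hle) (2 * (6367 / 10000 * (33 / 10)))
  rw [show a / (33 / 10) * (2 * (6367 / 10000 * (33 / 10))) = 2 * (6367 / 10000 * a) by
    field_simp] at hchord
  have hsinh := self_le_sinh_iff.2 (by positivity : 0 ≤ 3633 / 10000 * a)
  rw [hk]
  nlinarith

theorem mul_sinh_mul_le_sinh_of_ge {a : ℝ} (hge : 33 / 10 ≤ a) :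
    a * sinh (6367 / 10000 * a) ≤ sinh a := by
  have hk : (1 : ℝ) - 6367 / 10000 = 3633 / 10000 := by norm_num
  refine mul_sinh_mul_le_sinh_of_sub_exp_le (D := 0) (by linarith) (by norm_num)
    (sub_nonpos.2 (hk ▸ le_exp_mul_of_le hge)) ?_
  rw [hk, zero_mul, sinh_eq]
  linarith [exp_le_exp.2 (by linarith : -(3633 / 10000 * a) ≤ 3633 / 10000 * a)]

theorem mul_sinh_mul_le_sinh {a c : ℝ} (ha : 0 ≤ a) (hc : c ≤ 6367 / 10000) :
    a * sinh (c * a) ≤ sinh a :=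
  calc a * sinh (c * a) ≤ a * sinh (6367 / 10000 * a) :=
        mul_le_mul_of_nonneg_left (sinh_le_sinh.2 (mul_le_mul_of_nonneg_right hc ha)) ha
    _ ≤ sinh a := (le_total a (33 / 10)).elim (mul_sinh_mul_le_sinh_of_le ha)
        fun hge => mul_sinh_mul_le_sinh_of_ge hge

end Real

theorem stmt10 : ∀ x : ℝ, 0 < x →
    Real.arsinh x ≤ (π / 2) * Real.arsinh (qf x) := by
  intro x hx
  have ha : 0 < arsinh x := arsinh_pos_iff.2 hx
  have hc : 2 / π ≤ 6367 / 10000 := by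
    rw [div_le_iff₀ pi_pos]; linarith [pi_gt_d4]
  have hsinh : sinh (2 / π * arsinh x) ≤ qf x := by
    rw [qf, le_div_iff₀ ha, mul_comm]
    simpa only [sinh_arsinh] using mul_sinh_mul_le_sinh ha.le hc
  have harsinh : 2 / π * arsinh x ≤ arsinh (qf x) := by
    rwa [← arsinh_le_arsinh, arsinh_sinh] at hsinh
  calc arsinh x = π / 2 * (2 / π * arsinh x) := by field_simp
    _ ≤ π / 2 * arsinh (qf x) := by gcongr
end

section
/- Let h > 0, β > 0, and let N be a nonnegative integer. Then ∑_{k=N+1}^{∞} e^{−πβ·sinh(kh)} ≤ e^{−πβ·sinh(Nh)}/( πβ·h·cosh(Nh) ). -/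
/-!
For `k ≥ N + 1`, convexity of `sinh` on `[0, ∞)` gives
`sinh (k h) ≥ sinh (N h) + (k - N) h cosh (N h)`, so the tail is dominated by
`e^{-πβ sinh (N h)}` times the geometric series `∑_{m ≥ 1} e^{-c m}` with `c = πβ h cosh (N h)`,
whose sum `1 / (e^c - 1)` is at most `1 / c`.
-/

open Real

theorem Real.sinh_add_mul_cosh_le {a b : ℝ} (ha : 0 ≤ a) (hab : a ≤ b) :
    sinh a + (b - a) * cosh a ≤ sinh b := by
  have hderiv : ∀ x ∈ interior (Set.Ici a), cosh a ≤ deriv sinh x := by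
    intro x hx
    rw [interior_Ici, Set.mem_Ioi] at hx
    rw [deriv_sinh, cosh_le_cosh, abs_of_nonneg ha, abs_of_nonneg (ha.trans hx.le)]
    exact hx.le
  have := (convex_Ici a).mul_sub_le_image_sub_of_le_deriv continuous_sinh.continuousOn
    differentiable_sinh.differentiableOn hderiv a Set.self_mem_Ici b hab hab
  linarith

theorem Real.exp_neg_mul_sinh_le {a x y : ℝ} (ha : 0 ≤ a) (hx : 0 ≤ x) (hxy : x ≤ y) :
    exp (-(a * sinh y)) ≤ exp (-(a * sinh x)) * exp (-(a * cosh x * (y - x))) := by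
  rw [← exp_add, exp_le_exp]
  nlinarith [sinh_add_mul_cosh_le hx hxy]

theorem Real.hasSum_exp_neg_mul_succ {c : ℝ} (hc : 0 < c) :
    HasSum (fun n : ℕ => exp (-(c * (n + 1)))) (exp c - 1)⁻¹ := by
  have hr : exp (-c) < 1 := exp_lt_one_iff.mpr (neg_lt_zero.mpr hc)
  have hvalue : exp (-c) * (1 - exp (-c))⁻¹ = (exp c - 1)⁻¹ := by
    have : exp c - 1 ≠ 0 := sub_ne_zero.mpr (one_lt_exp_iff.mpr hc).ne'
    rw [exp_neg]
    field_simp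
  have hterm : (fun n : ℕ => exp (-(c * (n + 1)))) = fun n => exp (-c) * exp (-c) ^ n := by
    ext n
    rw [← exp_nat_mul, ← exp_add]
    ring_nf
  rw [hterm, ← hvalue]
  exact (hasSum_geometric_of_lt_one (exp_pos _).le hr).mul_left (exp (-c))

theorem Real.inv_exp_sub_one_le_inv {c : ℝ} (hc : 0 < c) : (exp c - 1)⁻¹ ≤ c⁻¹ :=
  inv_anti₀ hc (by linarith [add_one_le_exp c])

theorem tsum_subtype_le_eq_tsum_add {M : Type*} [AddCommMonoid M] [TopologicalSpace M]
    (f : ℕ → M) (m : ℕ) : ∑' k : {k : ℕ // m ≤ k}, f k = ∑' n : ℕ, f (n + m) :=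
  let e : ℕ ≃ {k : ℕ // m ≤ k} := (notMemRangeEquiv m).symm.trans
    (Equiv.subtypeEquivRight fun k => by simp)
  (e.tsum_eq (fun k => f k)).symm

theorem stmt12 (h β : ℝ) (hh : 0 < h) (hβ : 0 < β) (N : ℕ) :
    (∑' k : {k : ℕ // N + 1 ≤ k}, Real.exp (-(π * β * Real.sinh ((k : ℝ) * h)))) ≤
      Real.exp (-(π * β * Real.sinh (N * h))) / (π * β * h * Real.cosh (N * h)) := by
  set A := exp (-(π * β * sinh (N * h)))
  set c := π * β * h * cosh (N * h)
  have hc : 0 < c := by positivity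
  have hbound : ∀ n : ℕ, exp (-(π * β * sinh (((n + (N + 1) : ℕ) : ℝ) * h))) ≤
      A * exp (-(c * (n + 1))) := by
    intro n
    convert exp_neg_mul_sinh_le (a := π * β) (by positivity) (by positivity)
      (show (N : ℝ) * h ≤ ((n + (N + 1) : ℕ) : ℝ) * h by gcongr; omega) using 3
    push_cast
    ring
  have hsum := (hasSum_exp_neg_mul_succ hc).mul_left A
  rw [tsum_subtype_le_eq_tsum_add (fun k : ℕ => exp (-(π * β * sinh ((k : ℝ) * h))))]
  calc _ ≤ A * (exp c - 1)⁻¹ :=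
        hasSum_le hbound (hsum.summable.of_nonneg_of_le (fun _ => (exp_pos _).le) hbound).hasSum
          hsum
    _ ≤ A / c := by
        rw [div_eq_mul_inv]
        exact mul_le_mul_of_nonneg_left (inv_exp_sub_one_le_inv hc) (exp_pos _).le
end
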